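/- arXiv:1209.5117 — 6 statements merged into one kernel-verified Lean document; each statement's English description precedes it below -/
import Mathlib

section
/- Let a be an odd positive integer and b an even positive integer, and let g be a permutation of a set of size ab that is a product of b disjoint cycles each of length a. Then the number of matchings on that set that commute with g equals b! · a^{b/2} / (2^{b/2} · (b/2)!). -/
/-- A matching on a set is a fixed-point-free involution. -/
def IsMatching {X : Type*} (τ : Equiv.Perm X) : Prop :=
  τ * τ = 1 ∧ ∀ x, τ x ≠ x

/-- The number of matchings commuting with a given permutation. -/
noncomputable def matchingCount {X : Type*} (g : Equiv.Perm X) : ℕ :=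
  Nat.card {τ : Equiv.Perm X // IsMatching τ ∧ Commute g τ}

/-!
A matching `τ` commuting with `g` satisfies `τ (gⁱ x) = gⁱ (τ x)`, so it is determined on the
cycle of `x` by `τ x`. As the period `a` is odd, `τ x` is never on the cycle of `x` itself:
`τ x = gⁱ x` would give `x = g²ⁱ x`, hence `a ∣ i` and `τ x = x`. For each of the remaining points
`y`, multiplying by the commuting involution `σ : gⁱ x ↔ gⁱ y` turns the matchings with `τ x = y`
bijectively into the commuting matchings of the other cycles. So with `2k` cycles there are
`a (2k - 1)` times as many matchings as with `2k - 2` cycles, i.e. `(2k - 1)‼ aᵏ` in total.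
-/

open Equiv Equiv.Perm Finset MulAction
open scoped Nat

namespace Equiv.Perm

variable {X : Type*} {g τ σ : Perm X} {x y z : X}

lemma zpow_apply_eq_self_iff_period_dvd {i : ℤ} : (g ^ i) x = x ↔ (period g x : ℤ) ∣ i := by
  rw [← Perm.smul_def]
  exact zpow_smul_eq_iff_period_dvd

lemma zpow_apply_eq_zpow_apply_iff {i j : ℤ} :
    (g ^ i) x = (g ^ j) x ↔ (period g x : ℤ) ∣ i - j := by
  rw [← zpow_apply_eq_self_iff_period_dvd, ← (g ^ j).injective.eq_iff (a := (g ^ (i - j)) x),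
    ← mul_apply, ← zpow_add, add_sub_cancel]

lemma apply_zpow_apply_of_commute (h : Commute g τ) (i : ℤ) (x : X) :
    τ ((g ^ i) x) = (g ^ i) (τ x) :=
  (DFunLike.congr_fun (h.zpow_left i).eq x).symm

lemma apply_eq_of_commute_of_sameCycle (hτ : Commute g τ) (hσ : Commute g σ) (hx : τ x = σ x)
    (hz : g.SameCycle x z) : τ z = σ z := by
  obtain ⟨i, rfl⟩ := hz
  rw [apply_zpow_apply_of_commute hτ, apply_zpow_apply_of_commute hσ, hx]

lemma not_sameCycle_apply_of_odd_period (hτ : τ * τ = 1) (hc : Commute g τ)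
    (hodd : Odd (period g x)) (hx : τ x ≠ x) : ¬ g.SameCycle x (τ x) := by
  rintro ⟨i, hi⟩
  have h2i : (g ^ (2 * i)) x = x := by
    rw [two_mul, zpow_add, mul_apply, hi, ← apply_zpow_apply_of_commute hc, hi]
    exact DFunLike.congr_fun hτ x
  have hcop : IsCoprime (period g x : ℤ) 2 := Nat.isCoprime_iff_coprime.2 hodd.coprime_two_right
  have hi' : (g ^ i) x = x := zpow_apply_eq_self_iff_period_dvd.2
    (hcop.dvd_of_dvd_mul_left (zpow_apply_eq_self_iff_period_dvd.1 h2i))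
  exact hx (hi ▸ hi')

lemma sameCycle_cases (g : Perm X) (x y z : X) :
    (∃ i : ℤ, z = (g ^ i) x) ∨ (∃ i : ℤ, z = (g ^ i) y) ∨
      (¬ g.SameCycle x z ∧ ¬ g.SameCycle y z) := by
  by_cases hx : g.SameCycle x z
  · exact .inl (hx.imp fun _ => Eq.symm)
  by_cases hy : g.SameCycle y z
  · exact .inr (.inl (hy.imp fun _ => Eq.symm))
  exact .inr (.inr ⟨hx, hy⟩)

open Classical in
/-- `gⁱ x ↦ gⁱ y` on the cycle of `x`, the identity elsewhere; well defined as soon as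
`period g y ∣ period g x`. -/
noncomputable def cycleTransport (g : Perm X) (x y z : X) : X :=
  if h : g.SameCycle x z then (g ^ h.choose) y else z

lemma cycleTransport_zpow_apply (h : period g y ∣ period g x) (i : ℤ) :
    cycleTransport g x y ((g ^ i) x) = (g ^ i) y := by
  have hs : g.SameCycle x ((g ^ i) x) := ⟨i, rfl⟩
  rw [cycleTransport, dif_pos hs, zpow_apply_eq_zpow_apply_iff]
  exact (Int.natCast_dvd_natCast.2 h).trans (zpow_apply_eq_zpow_apply_iff.1 hs.choose_spec)

lemma cycleTransport_of_not_sameCycle (h : ¬ g.SameCycle x z) : cycleTransport g x y z = z :=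
  dif_neg h

open Classical in
noncomputable def swapCycles (g : Perm X) (x y z : X) : X :=
  if g.SameCycle x z then cycleTransport g x y z else cycleTransport g y x z

lemma swapCycles_zpow_apply_left (hp : period g x = period g y) (i : ℤ) :
    swapCycles g x y ((g ^ i) x) = (g ^ i) y := by
  rw [swapCycles, if_pos ⟨i, rfl⟩, cycleTransport_zpow_apply hp.symm.dvd]

lemma swapCycles_zpow_apply_right (hxy : ¬ g.SameCycle x y) (hp : period g x = period g y)
    (i : ℤ) : swapCycles g x y ((g ^ i) y) = (g ^ i) x := by
  have hx : ¬ g.SameCycle x ((g ^ i) y) := fun h => hxy (h.trans (SameCycle.symm ⟨i, rfl⟩))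
  rw [swapCycles, if_neg hx, cycleTransport_zpow_apply hp.dvd]

lemma swapCycles_of_not_sameCycle (hx : ¬ g.SameCycle x z) (hy : ¬ g.SameCycle y z) :
    swapCycles g x y z = z := by
  rw [swapCycles, if_neg hx, cycleTransport_of_not_sameCycle hy]

lemma swapCycles_involutive (hxy : ¬ g.SameCycle x y) (hp : period g x = period g y) :
    Function.Involutive (swapCycles g x y) := by
  intro z
  obtain ⟨i, rfl⟩ | ⟨i, rfl⟩ | ⟨hx, hy⟩ := sameCycle_cases g x y z
  · rw [swapCycles_zpow_apply_left hp, swapCycles_zpow_apply_right hxy hp]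
  · rw [swapCycles_zpow_apply_right hxy hp, swapCycles_zpow_apply_left hp]
  · rw [swapCycles_of_not_sameCycle hx hy, swapCycles_of_not_sameCycle hx hy]

lemma swapCycles_commute (hxy : ¬ g.SameCycle x y) (hp : period g x = period g y) :
    Function.Commute (swapCycles g x y) g := by
  intro z
  obtain ⟨i, rfl⟩ | ⟨i, rfl⟩ | ⟨hx, hy⟩ := sameCycle_cases g x y z
  · rw [← mul_apply g, ← zpow_one_add, swapCycles_zpow_apply_left hp, swapCycles_zpow_apply_left hp,
      zpow_one_add, mul_apply]
  · rw [← mul_apply g, ← zpow_one_add, swapCycles_zpow_apply_right hxy hp,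
      swapCycles_zpow_apply_right hxy hp, zpow_one_add, mul_apply]
  · rw [swapCycles_of_not_sameCycle hx hy, swapCycles_of_not_sameCycle
      (mt sameCycle_apply_right.1 hx) (mt sameCycle_apply_right.1 hy)]

variable [Fintype X]

open Classical in
/-- Unlike `(g.cycleOf x).support`, this contains `x` also when `g x = x`. -/
noncomputable def cycleFinset (g : Perm X) (x : X) : Finset X := {z | g.SameCycle x z}

lemma mem_cycleFinset : z ∈ g.cycleFinset x ↔ g.SameCycle x z := by
  simp [cycleFinset]

lemma card_cycleFinset (g : Perm X) (x : X) : #(g.cycleFinset x) = period g x := by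
  classical
  have h : (g.cycleFinset x : Set X) = orbit (Subgroup.zpowers g) x := by
    ext z
    rw [mem_coe, mem_cycleFinset, mem_orbit_iff, Subgroup.exists_zpowers]
    rfl
  rw [period_eq_minimalPeriod, minimalPeriod_eq_card, ← Set.toFinset_card]
  simp [← h]

lemma disjoint_cycleFinset (hxy : ¬ g.SameCycle x y) :
    _root_.Disjoint (g.cycleFinset x) (g.cycleFinset y) :=
  disjoint_left.2 fun _ hzx hzy =>
    hxy ((mem_cycleFinset.1 hzx).trans (mem_cycleFinset.1 hzy).symm)

variable [DecidableEq X]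

lemma cycleFinset_subset_sdiff {s : Finset X} (hs : ∀ z ∈ s, g.cycleFinset z ⊆ s) (x y : X) :
    ∀ z ∈ s \ (g.cycleFinset x ∪ g.cycleFinset y),
      g.cycleFinset z ⊆ s \ (g.cycleFinset x ∪ g.cycleFinset y) := by
  intro z hz w hw
  simp only [mem_sdiff, mem_union, mem_cycleFinset] at hz hw ⊢
  exact ⟨hs z hz.1 (mem_cycleFinset.2 hw),
    fun h => hz.2 (h.imp (·.trans hw.symm) (·.trans hw.symm))⟩

lemma period_eq_card_support_cycleOf (hx : g x ≠ x) : period g x = #(g.cycleOf x).support := by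
  have hc := isCycle_cycleOf g hx
  rw [← hc.orderOf]
  refine Nat.dvd_antisymm (pow_smul_eq_iff_period_dvd.1 ?_) (orderOf_dvd_of_pow_eq_one ?_)
  · rw [Perm.smul_def, ← cycleOf_pow_apply_self, pow_orderOf_eq_one, one_apply]
  · refine hc.pow_eq_one_iff.2 ⟨x, by rwa [cycleOf_apply_self], ?_⟩
    rw [cycleOf_pow_apply_self]
    exact pow_period_smul g x

lemma period_mem_parts_partition (g : Perm X) (x : X) : period g x ∈ g.partition.parts := by
  rw [parts_partition]
  by_cases hx : g x = x
  · rw [period_eq_one_iff.2 hx]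
    refine Multiset.mem_add.2 (.inr (Multiset.mem_replicate.2 ⟨?_, rfl⟩))
    exact (Nat.sub_pos_of_lt (card_lt_univ_of_notMem (notMem_support.2 hx))).ne'
  rw [period_eq_card_support_cycleOf hx, cycleType_def]
  exact Multiset.mem_add.2 (.inl (Multiset.mem_map_of_mem _
    (cycleOf_mem_cycleFactorsFinset_iff.2 (mem_support.2 hx))))

open Classical in
/-- The matchings of `s` commuting with `g`, as involutions of `X` with support exactly `s`. -/
noncomputable def commutingMatchingsOn (g : Perm X) (s : Finset X) : Finset (Perm X) :=
  {τ | τ * τ = 1 ∧ Commute g τ ∧ τ.support = s}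

lemma mem_commutingMatchingsOn {s : Finset X} :
    τ ∈ commutingMatchingsOn g s ↔ τ * τ = 1 ∧ Commute g τ ∧ τ.support = s := by
  simp [commutingMatchingsOn]

lemma commutingMatchingsOn_empty : commutingMatchingsOn g ∅ = {1} := by
  ext τ
  rw [mem_commutingMatchingsOn, support_eq_empty_iff, mem_singleton]
  exact ⟨fun h => h.2.2, fun h => by subst h; exact ⟨mul_one 1, .one_right g, rfl⟩⟩

lemma apply_mem_sdiff_cycleFinset {s : Finset X} (hτ : τ ∈ commutingMatchingsOn g s) (hx : x ∈ s)
    (hodd : Odd (period g x)) : τ x ∈ s \ g.cycleFinset x := by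
  obtain ⟨hττ, hτc, rfl⟩ := mem_commutingMatchingsOn.1 hτ
  exact mem_sdiff.2 ⟨apply_mem_support.2 hx, mem_cycleFinset.not.2
    (not_sameCycle_apply_of_odd_period hττ hτc hodd (mem_support.1 hx))⟩

lemma exists_mem_commutingMatchingsOn_apply_eq (hxy : ¬ g.SameCycle x y)
    (hp : period g x = period g y) :
    ∃ σ ∈ commutingMatchingsOn g (g.cycleFinset x ∪ g.cycleFinset y), σ x = y := by
  have hσ := swapCycles_involutive hxy hp
  refine ⟨hσ.toPerm, mem_commutingMatchingsOn.2 ⟨Equiv.ext hσ, ?_, ?_⟩, ?_⟩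
  · exact Equiv.ext fun z => (swapCycles_commute hxy hp z).symm
  · ext z
    simp only [mem_support, Function.Involutive.coe_toPerm, mem_union, mem_cycleFinset]
    obtain ⟨i, rfl⟩ | ⟨i, rfl⟩ | ⟨hx, hy⟩ := sameCycle_cases g x y z
    · rw [swapCycles_zpow_apply_left hp]
      exact iff_of_true (fun h => hxy ((g ^ i).injective h ▸ .rfl)) (.inl ⟨i, rfl⟩)
    · rw [swapCycles_zpow_apply_right hxy hp]
      exact iff_of_true (fun h => hxy ((g ^ i).injective h ▸ .rfl)) (.inr ⟨i, rfl⟩)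
    · rw [swapCycles_of_not_sameCycle hx hy]
      simp [hx, hy]
  · simpa using swapCycles_zpow_apply_left (g := g) hp 0

lemma mul_mem_commutingMatchingsOn_sdiff {s t : Finset X} (hτ : τ ∈ commutingMatchingsOn g s)
    (hσ : σ ∈ commutingMatchingsOn g t) (heq : ∀ z ∈ t, τ z = σ z) :
    τ * σ ∈ commutingMatchingsOn g (s \ t) := by
  obtain ⟨hττ, hτc, rfl⟩ := mem_commutingMatchingsOn.1 hτ
  obtain ⟨hσσ, hσc, rfl⟩ := mem_commutingMatchingsOn.1 hσ
  have hdisj : (τ * σ).Disjoint σ := fun z => by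
    by_cases hz : z ∈ σ.support
    · left
      rw [mul_apply, heq _ (apply_mem_support.2 hz), ← mul_apply, hσσ, one_apply]
    · exact .inr (notMem_support.1 hz)
  have hτ_eq : τ = τ * σ * σ := by rw [mul_assoc, hσσ, mul_one]
  refine mem_commutingMatchingsOn.2 ⟨?_, hτc.mul_right hσc, ?_⟩
  · calc τ * σ * (τ * σ) = τ * σ * (τ * σ) * (σ * σ) := by rw [hσσ, mul_one]
      _ = τ * σ * σ * (τ * σ * σ) := by rw [hdisj.symm.commute.mul_mul_mul_comm]
      _ = 1 := by rw [← hτ_eq, hττ]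
  · conv_rhs => rw [hτ_eq, hdisj.support_mul]
    exact (union_sdiff_cancel_right (disjoint_iff_disjoint_support.1 hdisj)).symm

lemma mul_mem_commutingMatchingsOn_union {s t : Finset X} (hτ : τ ∈ commutingMatchingsOn g s)
    (hσ : σ ∈ commutingMatchingsOn g t) (hst : _root_.Disjoint s t) :
    τ * σ ∈ commutingMatchingsOn g (s ∪ t) := by
  obtain ⟨hττ, hτc, rfl⟩ := mem_commutingMatchingsOn.1 hτ
  obtain ⟨hσσ, hσc, rfl⟩ := mem_commutingMatchingsOn.1 hσ
  have hdisj : τ.Disjoint σ := disjoint_iff_disjoint_support.2 hst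
  refine mem_commutingMatchingsOn.2 ⟨?_, hτc.mul_right hσc, hdisj.support_mul⟩
  rw [hdisj.symm.commute.mul_mul_mul_comm, hττ, hσσ, one_mul]

lemma card_filter_apply_eq {s : Finset X} (hs : ∀ z ∈ s, g.cycleFinset z ⊆ s) (hx : x ∈ s)
    (hy : y ∈ s) (hxy : ¬ g.SameCycle x y) (hp : period g x = period g y) :
    #{τ ∈ commutingMatchingsOn g s | τ x = y} =
      #(commutingMatchingsOn g (s \ (g.cycleFinset x ∪ g.cycleFinset y))) := by
  obtain ⟨σ, hσ, hσx⟩ := exists_mem_commutingMatchingsOn_apply_eq hxy hp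
  obtain ⟨hσσ, hσc, -⟩ := mem_commutingMatchingsOn.1 hσ
  have hσy : σ y = x := by rw [← hσx, ← mul_apply, hσσ, one_apply]
  have hts : g.cycleFinset x ∪ g.cycleFinset y ⊆ s := union_subset (hs x hx) (hs y hy)
  refine card_nbij' (· * σ) (· * σ) (fun τ hτ => ?_) (fun τ hτ => ?_)
    (fun τ _ => by simp [mul_assoc, hσσ]) (fun τ _ => by simp [mul_assoc, hσσ])
  · obtain ⟨hτ, hτx⟩ := mem_filter.1 hτ
    obtain ⟨hττ, hτc, -⟩ := mem_commutingMatchingsOn.1 hτ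
    have hτy : τ y = x := by rw [← hτx, ← mul_apply, hττ, one_apply]
    refine mul_mem_commutingMatchingsOn_sdiff hτ hσ fun z hz => ?_
    rcases mem_union.1 hz with hz | hz
    · exact apply_eq_of_commute_of_sameCycle hτc hσc (hτx.trans hσx.symm) (mem_cycleFinset.1 hz)
    · exact apply_eq_of_commute_of_sameCycle hτc hσc (hτy.trans hσy.symm) (mem_cycleFinset.1 hz)
  · have hτ' := mul_mem_commutingMatchingsOn_union hτ hσ sdiff_disjoint
    rw [sdiff_union_of_subset hts] at hτ'
    refine mem_filter.2 ⟨hτ', ?_⟩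
    have hyτ : y ∉ τ.support := by
      rw [(mem_commutingMatchingsOn.1 hτ).2.2, mem_sdiff, not_and_not_right]
      exact fun _ => mem_union_right _ (mem_cycleFinset.2 .rfl)
    rw [mul_apply, hσx, notMem_support.1 hyτ]

lemma card_commutingMatchingsOn {a : ℕ} (ha : Odd a) (hper : ∀ x : X, period g x = a) (k : ℕ)
    {s : Finset X} (hs : ∀ z ∈ s, g.cycleFinset z ⊆ s) (hcard : #s = a * (2 * k)) :
    #(commutingMatchingsOn g s) = (2 * k - 1)‼ * a ^ k := by
  induction k generalizing s with
  | zero =>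
    rw [mul_zero, mul_zero, card_eq_zero] at hcard
    rw [hcard, commutingMatchingsOn_empty, card_singleton, mul_zero, zero_tsub, pow_zero]
    rfl
  | succ k ih =>
    obtain ⟨x, hx⟩ : s.Nonempty := card_pos.1 (by rw [hcard]; exact Nat.mul_pos ha.pos (by omega))
    have hfiber : ∀ y ∈ s \ g.cycleFinset x,
        #{τ ∈ commutingMatchingsOn g s | τ x = y} = (2 * k - 1)‼ * a ^ k := by
      intro y hy
      obtain ⟨hy, hxy⟩ := mem_sdiff.1 hy
      rw [mem_cycleFinset] at hxy
      rw [card_filter_apply_eq hs hx hy hxy (by rw [hper, hper])]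
      refine ih (cycleFinset_subset_sdiff hs x y) ?_
      rw [card_sdiff_of_subset (union_subset (hs x hx) (hs y hy)),
        card_union_of_disjoint (disjoint_cycleFinset hxy), card_cycleFinset, card_cycleFinset,
        hper, hper, hcard, Nat.sub_eq_of_eq_add]
      ring
    rw [card_eq_sum_card_fiberwise fun τ hτ => apply_mem_sdiff_cycleFinset hτ hx (hper x ▸ ha),
      sum_congr rfl hfiber, sum_const, smul_eq_mul, card_sdiff_of_subset (hs x hx),
      card_cycleFinset, hper, hcard,
      show a * (2 * (k + 1)) - a = (2 * k + 1) * a by rw [Nat.sub_eq_of_eq_add]; ring,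
      show 2 * (k + 1) - 1 = 2 * k + 1 by omega, Nat.doubleFactorial_add_one]
    ring

end Equiv.Perm

lemma matchingCount_eq_card_commutingMatchingsOn {X : Type*} [Fintype X] [DecidableEq X]
    (g : Perm X) : matchingCount g = #(g.commutingMatchingsOn univ) := by
  classical
  rw [matchingCount, Nat.card_eq_fintype_card, Fintype.card_subtype]
  congr 1
  ext τ
  simp [IsMatching, mem_commutingMatchingsOn, eq_univ_iff_forall, and_comm, and_left_comm]

lemma Nat.two_pow_mul_factorial_mul_doubleFactorial (k : ℕ) :
    2 ^ k * k ! * (2 * k - 1)‼ = (2 * k)! := by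
  cases k with
  | zero => rfl
  | succ k =>
    rw [show 2 * (k + 1) - 1 = 2 * k + 1 by omega, ← Nat.doubleFactorial_two_mul,
      show 2 * (k + 1) = 2 * k + 1 + 1 by ring, Nat.factorial_eq_mul_doubleFactorial]

theorem stmt3_general (a b : ℕ) (ha : Odd a) (hb : Even b)
    (g : Equiv.Perm (Fin (a * b)))
    (hg : g.partition.parts = Multiset.replicate b a) :
    (matchingCount g : ℚ) =
      (b.factorial * a ^ (b / 2) : ℚ) / (2 ^ (b / 2) * (b / 2).factorial) := by
  have hper : ∀ x, period g x = a := fun x =>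
    Multiset.eq_of_mem_replicate (hg ▸ period_mem_parts_partition g x)
  obtain ⟨k, rfl⟩ := hb
  have hcount := card_commutingMatchingsOn ha hper k (s := univ) (fun _ _ => subset_univ _)
    (by rw [card_univ, Fintype.card_fin, two_mul])
  rw [matchingCount_eq_card_commutingMatchingsOn, hcount, ← two_mul,
    Nat.mul_div_cancel_left k two_pos, ← Nat.two_pow_mul_factorial_mul_doubleFactorial]
  push_cast
  field_simp

/-- Let `a` be odd positive, `b` even positive, and let `g` be a
permutation of a set of size `a*b` that is the product of `b` disjoint cycles each
of length `a`. Then the number of matchings commuting with `g` is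
`b! a^{b/2} / (2^{b/2} (b/2)!)`. -/
theorem stmt3 (a b : ℕ) (ha : Odd a) (ha0 : 0 < a) (hb : Even b) (hb0 : 0 < b)
    (g : Equiv.Perm (Fin (a * b)))
    (hg : g.partition.parts = Multiset.replicate b a) :
    (matchingCount g : ℚ) =
      (b.factorial * a ^ (b / 2) : ℚ) / (2 ^ (b / 2) * (b / 2).factorial) :=
  stmt3_general a b ha hb g hg
end

section
/- Let g ∈ S_{2m} be the product of two disjoint cycles of equal length m, say g = (α_1 α_2 ⋯ α_m)(β_1 β_2 ⋯ β_m). If σ is a matching on the 2m points {α_1,…,α_m,β_1,…,β_m} that commutes with g, then either σ = g^{m/2} (which requires m to be even), or there exists j with 1 ≤ j ≤ m such that σ = (α_1 β_j)(α_2 β_{j+1})(α_3 β_{j+2}) ⋯ (α_m β_{j-1}), where the indices of the β's are taken cyclically modulo m. -/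
/-!
Since `σ` commutes with `g`, it maps the `g`-orbit of `α 0` onto the `g`-orbit of `σ (α 0)`
and is determined there by the single value `σ (α 0)`. If that value is `β j`, then
`σ (α k) = β (k + j)`. If it is `α j`, then `σ` acts on the `α`'s as the rotation by `j`,
which is a fixed-point-free involution only when `2 j = m`; the `β`'s must then also be
matched among themselves, again by the rotation by `m / 2`, so `σ = g ^ (m / 2)`.
-/

open Equiv Fin.NatCast Fin.CommRing

lemma Fin.two_mul_val_eq_of_add_self_eq_zero {m : ℕ} [NeZero m] {j : Fin m}
    (h : j + j = 0) (hj : j ≠ 0) : 2 * j.val = m := by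
  have hval := congrArg Fin.val h
  have hpos : j.val ≠ 0 := Fin.val_ne_iff.2 hj
  rw [Fin.val_add_eq_ite] at hval
  split_ifs at hval <;> simp at hval <;> omega

lemma IsMatching.apply_apply {X : Type*} {σ : Perm X} (hσ : IsMatching σ) (x : X) :
    σ (σ x) = x :=
  DFunLike.congr_fun hσ.1 x

section Cycle

variable {m : ℕ} [NeZero m] {X : Type*} {g σ : Perm X} {f f' : Fin m → X}

lemma pow_apply_eq_add (hf : ∀ i, g (f i) = f (i + 1)) (n : ℕ) (i : Fin m) :
    (g ^ n) (f i) = f (i + n) := by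
  induction n with
  | zero => simp
  | succ n ih =>
    rw [pow_succ', Perm.mul_apply, ih, hf]
    push_cast
    ring_nf

lemma Commute.apply_eq_add (hcomm : Commute g σ) (hf : ∀ i, g (f i) = f (i + 1))
    (hf' : ∀ i, g (f' i) = f' (i + 1)) {j : Fin m} (h0 : σ (f 0) = f' j) (k : Fin m) :
    σ (f k) = f' (k + j) := by
  have hk : f k = (g ^ k.val) (f 0) := by
    rw [pow_apply_eq_add hf, Fin.cast_val_eq_self, zero_add]
  calc σ (f k) = (g ^ k.val) (σ (f 0)) := by
        rw [hk]; exact (DFunLike.congr_fun (hcomm.pow_left _).eq _).symm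
    _ = f' (k + j) := by rw [h0, pow_apply_eq_add hf', Fin.cast_val_eq_self, add_comm]

lemma IsMatching.two_mul_val_eq_of_apply_eq_add (hσ : IsMatching σ) (hf : Function.Injective f)
    {j : Fin m} (hσf : ∀ k, σ (f k) = f (k + j)) : 2 * j.val = m := by
  refine Fin.two_mul_val_eq_of_add_self_eq_zero ?_ fun hj => hσ.2 (f 0) ?_
  · have h := hσ.apply_apply (f 0)
    rw [hσf, hσf, zero_add] at h
    exact hf h
  · rw [hσf, hj, add_zero]

lemma apply_eq_pow_half_apply (hf : ∀ i, g (f i) = f (i + 1)) {j : Fin m}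
    (hσf : ∀ k, σ (f k) = f (k + j)) (hj : 2 * j.val = m) (k : Fin m) :
    σ (f k) = (g ^ (m / 2)) (f k) := by
  rw [hσf, pow_apply_eq_add hf, show m / 2 = j.val by omega, Fin.cast_val_eq_self]

end Cycle

theorem stmt6_general (m : ℕ) [NeZero m] (X : Type*)
    (α β : Fin m → X) (hbij : Function.Bijective (Sum.elim α β))
    (g : Equiv.Perm X)
    (hgα : ∀ i, g (α i) = α (i + 1)) (hgβ : ∀ i, g (β i) = β (i + 1))
    (σ : Equiv.Perm X) (hσ : IsMatching σ) (hcomm : Commute g σ) :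
    (Even m ∧ σ = g ^ (m / 2)) ∨ ∃ j : Fin m, ∀ k : Fin m, σ (α k) = β (k + j) := by
  have hαinj : Function.Injective α := hbij.injective.comp Sum.inl_injective
  have hβinj : Function.Injective β := hbij.injective.comp Sum.inr_injective
  have hαβ : ∀ i k, α i ≠ β k := fun i k h => Sum.inl_ne_inr (hbij.injective h)
  obtain ⟨j | j, hj⟩ := hbij.surjective (σ (α 0))
  · have hσα := hcomm.apply_eq_add hgα hgα hj.symm
    have h2j := hσ.two_mul_val_eq_of_apply_eq_add hαinj hσα
    obtain ⟨i | j', hj'⟩ := hbij.surjective (σ (β 0))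
    · refine absurd ?_ (hαβ (i + j) 0)
      rw [← hσα, show α i = σ (β 0) from hj', hσ.apply_apply]
    have hσβ := hcomm.apply_eq_add hgβ hgβ hj'.symm
    have h2j' := hσ.two_mul_val_eq_of_apply_eq_add hβinj hσβ
    refine Or.inl ⟨⟨j.val, by omega⟩, Equiv.ext <| hbij.surjective.forall.2 <| Sum.forall.2
      ⟨apply_eq_pow_half_apply hgα hσα h2j, apply_eq_pow_half_apply hgβ hσβ h2j'⟩⟩
  · exact Or.inr ⟨j, hcomm.apply_eq_add hgα hgβ hj.symm⟩

/-- Let `g` be the product of two disjoint cycles of equal length `m`,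
say `g = (α_1 ⋯ α_m)(β_1 ⋯ β_m)`, on the `2m` points `{α_1,…,α_m,β_1,…,β_m}`.
If `σ` is a matching on these points commuting with `g`, then either `σ = g^{m/2}`
(which requires `m` even), or `σ = (α_1 β_j)(α_2 β_{j+1}) ⋯ (α_m β_{j-1})` for some `j`
(indices of the `β`'s cyclic mod `m`).  Here the two cycles are encoded (0-indexed) by
`α β : Fin m → X` with `Sum.elim α β` bijective. -/
theorem stmt6 (m : ℕ) [NeZero m] (X : Type*) [Fintype X] [DecidableEq X]
    (α β : Fin m → X) (hbij : Function.Bijective (Sum.elim α β))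
    (g : Equiv.Perm X)
    (hgα : ∀ i, g (α i) = α (i + 1)) (hgβ : ∀ i, g (β i) = β (i + 1))
    (σ : Equiv.Perm X) (hσ : IsMatching σ) (hcomm : Commute g σ) :
    (Even m ∧ σ = g ^ (m / 2)) ∨ ∃ j : Fin m, ∀ k : Fin m, σ (α k) = β (k + j) :=
  stmt6_general m X α β hbij g hgα hgβ σ hσ hcomm
end

section
/- Let g ∈ S_{2m} be the product of two disjoint cycles of equal length m. Then the number of matchings on the 2m points that commute with g is exactly m + 1 if m is even, and exactly m if m is odd. -/
/-!
Relabel the `2m` points as `Fin 2 × ZMod m` so that `g` becomes `(i, x) ↦ (i, x + 1)`.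
A permutation commuting with it is determined by the images of `(0, 0)` and `(1, 0)`:
`τ (i, x) = (b i, c i + x)`. For a matching, `b` is an involution of `Fin 2`. If `b` swaps
the two cycles, then `c 1 = -c 0` with `c 0` arbitrary, giving `m` matchings. If `b` fixes
them, each `c i` must have additive order `2`, and `ZMod m` has exactly one such element
when `m` is even and none when `m` is odd.
-/

open Equiv Equiv.Perm Function

section Transport

variable {α β : Type*}

lemma IsMatching.involutive {τ : Perm α} (h : IsMatching τ) : Involutive τ :=
  fun x => DFunLike.congr_fun h.1 x

lemma isMatching_toPerm {f : α → α} (hf : Involutive f) (hfix : ∀ x, f x ≠ x) :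
    IsMatching hf.toPerm :=
  ⟨Perm.ext hf, hfix⟩

lemma isMatching_permCongr_iff (e : α ≃ β) (τ : Perm α) :
    IsMatching (e.permCongr τ) ↔ IsMatching τ := by
  refine and_congr ?_ ?_
  · rw [← e.permCongrHom_coe, ← map_mul, ← map_one e.permCongrHom,
      e.permCongrHom.injective.eq_iff]
  · rw [← e.forall_congr_right]
    simp

lemma matchingCount_permCongr (e : α ≃ β) (g : Perm α) :
    matchingCount (e.permCongr g) = matchingCount g := by
  refine (Nat.card_congr (e.permCongr.subtypeEquiv fun τ => ?_)).symm
  rw [isMatching_permCongr_iff, ← e.permCongrHom_coe, commute_map_iff e.permCongrHom.injective]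

lemma cycleType_permCongr [Fintype α] [DecidableEq α] [Fintype β] [DecidableEq β]
    (e : α ≃ β) (g : Perm α) : (e.permCongr g).cycleType = g.cycleType := by
  have h_extend :
      e.permCongr g = g.extendDomain (e.trans (subtypeUnivEquiv fun _ => trivial).symm) := by
    ext b
    rw [extendDomain_apply_subtype _ _ trivial]
    simp [subtypeUnivEquiv]
  rw [h_extend, cycleType_extendDomain]

end Transport

lemma addOrderOf_eq_two_iff_add_self_eq_zero {G : Type*} [AddMonoid G] {a : G} :
    addOrderOf a = 2 ↔ a + a = 0 ∧ a ≠ 0 := by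
  refine ⟨fun h => ⟨?_, ?_⟩, fun h => addOrderOf_eq_prime (by rw [two_nsmul, h.1]) h.2⟩
  · rw [← two_nsmul, ← h, addOrderOf_nsmul_eq_zero]
  · rintro rfl
    simp at h

lemma card_addOrderOf_eq_two {G : Type*} [AddGroup G] [IsAddCyclic G] [Fintype G] :
    Nat.card {a : G // addOrderOf a = 2} = if Even (Fintype.card G) then 1 else 0 := by
  classical
  split_ifs with h
  · rw [Nat.card_eq_fintype_card, Fintype.card_subtype,
      IsAddCyclic.card_addOrderOf_eq_totient (even_iff_two_dvd.1 h), Nat.totient_two]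
  · rw [Nat.card_eq_zero]
    exact Or.inl ⟨fun a => h (even_iff_two_dvd.2 (a.2 ▸ addOrderOf_dvd_card))⟩

-- Cycle types omit fixed points, so a `1`-cycle contributes nothing.
lemma cycleType_finRotate_eq_filter (m : ℕ) :
    (finRotate m).cycleType = ({m} : Multiset ℕ).filter (2 ≤ ·) := by
  rcases Nat.lt_or_ge m 2 with hm | hm
  · rw [Multiset.filter_singleton, if_neg (by omega), Multiset.empty_eq_zero, cycleType_eq_zero]
    interval_cases m <;> exact Subsingleton.elim _ _
  · rw [cycleType_finRotate_of_le hm, Multiset.filter_singleton, if_pos hm]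

section DoubleCycle

variable (m : ℕ)

def blockEquiv (i : Fin 2) : ZMod m ≃ {p : Fin 2 × ZMod m // p.1 = i} where
  toFun x := ⟨(i, x), rfl⟩
  invFun p := p.1.2
  left_inv _ := rfl
  right_inv := by rintro ⟨⟨j, x⟩, rfl⟩; rfl

def blockCycle (i : Fin 2) : Perm (Fin 2 × ZMod m) :=
  (Equiv.addRight 1).extendDomain (blockEquiv m i)

def doubleCycle : Perm (Fin 2 × ZMod m) := blockCycle m 0 * blockCycle m 1

variable {m}

lemma blockCycle_apply_self (i : Fin 2) (x : ZMod m) : blockCycle m i (i, x) = (i, x + 1) :=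
  extendDomain_apply_subtype _ (blockEquiv m i) (b := (i, x)) rfl

lemma blockCycle_apply_of_ne {i j : Fin 2} (h : j ≠ i) (x : ZMod m) :
    blockCycle m i (j, x) = (j, x) :=
  extendDomain_apply_not_subtype _ (blockEquiv m i) h

lemma doubleCycle_apply (p : Fin 2 × ZMod m) : doubleCycle m p = (p.1, p.2 + 1) := by
  obtain ⟨i, x⟩ := p
  fin_cases i <;> simp [doubleCycle, blockCycle_apply_of_ne, blockCycle_apply_self]

lemma disjoint_blockCycle : Disjoint (blockCycle m 0) (blockCycle m 1) := by
  rintro ⟨i, x⟩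
  fin_cases i
  · exact Or.inr (blockCycle_apply_of_ne (by decide) x)
  · exact Or.inl (blockCycle_apply_of_ne (by decide) x)

lemma cycleType_addRight_one [NeZero m] :
    (Equiv.addRight (1 : ZMod m)).cycleType = ({m} : Multiset ℕ).filter (2 ≤ ·) := by
  obtain ⟨n, rfl⟩ := Nat.exists_eq_succ_of_ne_zero (NeZero.ne m)
  rw [← cycleType_finRotate_eq_filter]
  congr 1
  ext x
  exact (finRotate_apply (n := n + 1) x).symm

lemma cycleType_doubleCycle [NeZero m] :
    (doubleCycle m).cycleType = (Multiset.replicate 2 m).filter (2 ≤ ·) := by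
  rw [doubleCycle, disjoint_blockCycle.cycleType_mul, blockCycle, blockCycle,
    cycleType_extendDomain, cycleType_extendDomain, cycleType_addRight_one,
    ← Multiset.filter_add]
  rfl

lemma doubleCycle_pow_apply (n : ℕ) (p : Fin 2 × ZMod m) :
    (doubleCycle m ^ n) p = (p.1, p.2 + n) := by
  induction n with
  | zero => simp
  | succ n ih => rw [pow_succ', mul_apply, ih, doubleCycle_apply, Nat.cast_succ, add_assoc]

lemma apply_eq_of_commute_doubleCycle [NeZero m] {τ : Perm (Fin 2 × ZMod m)}
    (h : Commute (doubleCycle m) τ) (i : Fin 2) (x : ZMod m) :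
    τ (i, x) = ((τ (i, 0)).1, (τ (i, 0)).2 + x) := by
  obtain ⟨n, rfl⟩ := ZMod.natCast_zmod_surjective x
  have h_pow := DFunLike.congr_fun (h.pow_left n).eq (i, 0)
  simpa only [mul_apply, doubleCycle_pow_apply, zero_add] using h_pow.symm

variable (m)

def crossMatching (a : ZMod m) : Perm (Fin 2 × ZMod m) :=
  Involutive.toPerm (fun p => (p.1 + 1, if p.1 = 0 then p.2 + a else p.2 - a)) <| by
    rintro ⟨i, x⟩
    fin_cases i <;> simp

def blockMatching (c : Fin 2 → {a : ZMod m // addOrderOf a = 2}) : Perm (Fin 2 × ZMod m) :=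
  Involutive.toPerm (fun p => (p.1, p.2 + c p.1)) <| by
    rintro ⟨i, x⟩
    simp [add_assoc, (addOrderOf_eq_two_iff_add_self_eq_zero.1 (c i).2).1]

variable {m}

@[simp]
lemma crossMatching_apply (a : ZMod m) (p : Fin 2 × ZMod m) :
    crossMatching m a p = (p.1 + 1, if p.1 = 0 then p.2 + a else p.2 - a) :=
  rfl

@[simp]
lemma blockMatching_apply (c : Fin 2 → {a : ZMod m // addOrderOf a = 2}) (p : Fin 2 × ZMod m) :
    blockMatching m c p = (p.1, p.2 + c p.1) :=
  rfl

lemma isMatching_crossMatching (a : ZMod m) : IsMatching (crossMatching m a) :=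
  isMatching_toPerm _ fun ⟨i, x⟩ h => by fin_cases i <;> simp at h

lemma isMatching_blockMatching (c : Fin 2 → {a : ZMod m // addOrderOf a = 2}) :
    IsMatching (blockMatching m c) :=
  isMatching_toPerm _ fun ⟨i, x⟩ h =>
    (addOrderOf_eq_two_iff_add_self_eq_zero.1 (c i).2).2 (by simpa using h)

lemma commute_doubleCycle_iff {τ : Perm (Fin 2 × ZMod m)} :
    Commute (doubleCycle m) τ ↔ ∀ p, τ (p.1, p.2 + 1) = ((τ p).1, (τ p).2 + 1) := by
  simp only [Commute, SemiconjBy, Perm.ext_iff, mul_apply, doubleCycle_apply, eq_comm]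

lemma commute_crossMatching (a : ZMod m) : Commute (doubleCycle m) (crossMatching m a) :=
  commute_doubleCycle_iff.2 fun ⟨i, x⟩ => by fin_cases i <;> simp <;> ring

lemma commute_blockMatching (c : Fin 2 → {a : ZMod m // addOrderOf a = 2}) :
    Commute (doubleCycle m) (blockMatching m c) :=
  commute_doubleCycle_iff.2 fun ⟨i, x⟩ => by simp; ring

variable (m)

def commutingMatching :
    ZMod m ⊕ (Fin 2 → {a : ZMod m // addOrderOf a = 2}) →
      {τ : Perm (Fin 2 × ZMod m) // IsMatching τ ∧ Commute (doubleCycle m) τ} :=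
  Sum.elim (fun a => ⟨crossMatching m a, isMatching_crossMatching a, commute_crossMatching a⟩)
    (fun c => ⟨blockMatching m c, isMatching_blockMatching c, commute_blockMatching c⟩)

variable {m}

lemma commutingMatching_injective : Injective (commutingMatching m) := by
  rintro (a | c) (a' | c') h <;>
    have h0 := congr_arg (fun τ => τ.1 (0, 0)) h <;>
    have h1 := congr_arg (fun τ => τ.1 (1, 0)) h <;>
    simp [commutingMatching] at h0 h1
  · exact congr_arg _ h0
  · exact congr_arg _ (funext fun i => by fin_cases i <;> exact Subtype.ext ‹_›)

lemma commutingMatching_surjective [NeZero m] : Surjective (commutingMatching m) := by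
  rintro ⟨τ, hτ, hcomm⟩
  set b : Fin 2 → Fin 2 := fun i => (τ (i, 0)).1
  set c : Fin 2 → ZMod m := fun i => (τ (i, 0)).2
  have hτ_apply (i : Fin 2) (x : ZMod m) : τ (i, x) = (b i, c i + x) :=
    apply_eq_of_commute_doubleCycle hcomm i x
  have hinv (i : Fin 2) : b (b i) = i ∧ c (b i) + c i = 0 := by
    have hτ_inv := hτ.involutive (i, 0)
    rw [hτ_apply i 0, add_zero, hτ_apply] at hτ_inv
    simpa [add_comm] using hτ_inv
  have hb : b = id ∨ b = (· + 1) :=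
    (by decide : ∀ f : Fin 2 → Fin 2, (∀ i, f (f i) = i) → f = id ∨ f = (· + 1))
      b fun i => (hinv i).1
  rcases hb with hb | hb
  · have hc (i : Fin 2) : addOrderOf (c i) = 2 := by
      refine addOrderOf_eq_two_iff_add_self_eq_zero.2
        ⟨by simpa [hb] using (hinv i).2, fun h0 => hτ.2 (i, 0) ?_⟩
      simp [hτ_apply, hb, h0]
    refine ⟨Sum.inr fun i => ⟨c i, hc i⟩, Subtype.ext (Perm.ext ?_)⟩
    rintro ⟨i, x⟩
    simp [commutingMatching, hτ_apply, hb, add_comm]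
  · have hc1 : c 1 = -c 0 := eq_neg_of_add_eq_zero_left (by simpa [hb] using (hinv 0).2)
    refine ⟨Sum.inl (c 0), Subtype.ext (Perm.ext ?_)⟩
    rintro ⟨i, x⟩
    fin_cases i <;> simp [commutingMatching, hτ_apply, hb, hc1] <;> ring

lemma matchingCount_doubleCycle [NeZero m] :
    matchingCount (doubleCycle m) = if Even m then m + 1 else m := by
  rw [matchingCount, ← Nat.card_congr (Equiv.ofBijective _
      ⟨commutingMatching_injective, commutingMatching_surjective⟩),
    Nat.card_sum, Nat.card_pi, Nat.card_zmod]
  simp only [card_addOrderOf_eq_two, ZMod.card]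
  split_ifs <;> simp

end DoubleCycle

/-- If `g ∈ S_{2m}` is the product of two disjoint cycles of equal
length `m`, then the number of matchings on the `2m` points commuting with `g` is
`m + 1` if `m` is even and `m` if `m` is odd. -/
theorem stmt7 (m : ℕ) (hm : 0 < m) (g : Equiv.Perm (Fin (2 * m)))
    (hg : g.partition.parts = Multiset.replicate 2 m) :
    matchingCount g = if Even m then m + 1 else m := by
  have : NeZero m := ⟨hm.ne'⟩
  obtain ⟨e⟩ : Nonempty (Fin 2 × ZMod m ≃ Fin (2 * m)) :=
    ⟨Fintype.equivOfCardEq (by simp [ZMod.card])⟩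
  have hconj : IsConj (e.permCongr (doubleCycle m)) g := by
    rw [isConj_iff_cycleType_eq, cycleType_permCongr, cycleType_doubleCycle,
      ← filter_parts_partition_eq_cycleType, hg]
  obtain ⟨σ, rfl⟩ := isConj_iff.1 hconj
  rw [← permCongr_eq_mul, matchingCount_permCongr, matchingCount_permCongr,
    matchingCount_doubleCycle]
end

section
/- Let c be a single cycle of length m on a set X of size m, and let σ be a matching on X. Then σ commutes with c if and only if m is even and σ = c^{m/2}. In particular, if m is even there is exactly one matching on X commuting with c, and if m is odd there is none. -/
/-- Let `c` be a single cycle of length `m` on a set `X` of size `m`,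
and let `σ` be a matching on `X`. Then `σ` commutes with `c` iff `m` is even and
`σ = c^{m/2}`; in particular the number of matchings commuting with `c` is `1` if
`m` is even and `0` if `m` is odd. -/
theorem stmt8 (m : ℕ) (hm : 0 < m) (X : Type*) [Fintype X] [DecidableEq X]
    (hX : Fintype.card X = m) (c : Equiv.Perm X)
    (hc : c.partition.parts = {m}) :
    (∀ σ : Equiv.Perm X, IsMatching σ → (Commute c σ ↔ Even m ∧ σ = c ^ (m / 2))) ∧
      matchingCount c = if Even m then 1 else 0 := by
  have hne : Nonempty X := Fintype.card_pos_iff.mp (hX ▸ hm)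
  obtain ⟨x0⟩ := hne
  rcases eq_or_lt_of_le (Nat.one_le_iff_ne_zero.mpr hm.ne') with h1 | h2
  · -- m = 1 : X is a subsingleton, no matchings at all
    have hsub : Subsingleton X := by
      rw [← Fintype.card_le_one_iff_subsingleton, hX, ← h1]
    have hnomatch : ∀ σ : Equiv.Perm X, ¬ IsMatching σ := by
      intro σ hσ
      exact hσ.2 x0 (Subsingleton.elim _ _)
    constructor
    · intro σ hσ; exact absurd hσ (hnomatch σ)
    · have : IsEmpty {τ : Equiv.Perm X // IsMatching τ ∧ Commute c τ} :=
        ⟨fun t => hnomatch t.1 t.2.1⟩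
      rw [matchingCount, Nat.card_eq_zero.mpr (Or.inl this), if_neg]
      rw [← h1]; exact Nat.not_even_iff_odd.mpr (by norm_num)
  · -- m ≥ 2
    have hcy : c.cycleType = {m} := by
      rw [← Equiv.Perm.filter_parts_partition_eq_cycleType, hc]
      simp only [Multiset.filter_singleton, if_pos (by omega : 2 ≤ m)]
    have hcycle : c.IsCycle := by
      rw [← Equiv.Perm.card_cycleType_eq_one, hcy]; simp
    have hsuppcard : c.support.card = m := by
      rw [← Equiv.Perm.sum_cycleType, hcy]; simp
    have hsupp : c.support = Finset.univ :=
      Finset.eq_univ_of_card _ (hsuppcard.trans hX.symm)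
    have horder : orderOf c = m := by
      rw [hcycle.orderOf, hsuppcard]
    have hmoves : ∀ x : X, c x ≠ x := by
      intro x
      have : x ∈ c.support := hsupp ▸ Finset.mem_univ x
      exact Equiv.Perm.mem_support.mp this
    have hpowdvd : ∀ n : ℕ, c ^ n = 1 ↔ m ∣ n := by
      intro n; rw [← horder]; exact orderOf_dvd_iff_pow_eq_one.symm
    -- key: a matching commuting with c equals c^(m/2) and m is even
    have key : ∀ σ : Equiv.Perm X, IsMatching σ → Commute c σ →
        Even m ∧ σ = c ^ (m / 2) := by
      intro σ hσ hcomm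
      -- σ is a power of c
      obtain ⟨hc', hmem⟩ := hcycle.commute_iff.mp hcomm.symm
      have hofs : Equiv.Perm.ofSubtype (σ.subtypePerm hc') = σ :=
        Equiv.Perm.ofSubtype_subtypePerm hc'
          (fun x _ => hsupp ▸ Finset.mem_univ x)
      rw [hofs] at hmem
      obtain ⟨n, hn'⟩ := (mem_powers_iff_mem_zpowers.mpr hmem)
      have hn : c ^ n = σ := hn'
      -- c^(2n) = 1 so m ∣ 2n; and m ∤ n since σ is fixed-point free
      have h2n : m ∣ 2 * n := by
        rw [← hpowdvd, two_mul, pow_add, hn, hσ.1]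
      have hnn : ¬ m ∣ n := by
        intro hdvd
        have : σ = 1 := by rw [← hn, hpowdvd]; exact hdvd
        exact hσ.2 x0 (by rw [this]; rfl)
      have heven : Even m := by
        by_contra hodd
        have hmod : m % 2 = 1 := Nat.odd_iff.mp (Nat.not_even_iff_odd.mp hodd)
        have hco : Nat.Coprime m 2 :=
          ((Nat.Prime.coprime_iff_not_dvd Nat.prime_two).mpr (by omega)).symm
        exact hnn (hco.dvd_of_dvd_mul_left h2n)
      obtain ⟨t, ht⟩ := id heven
      have htm : m = 2 * t := by omega
      have htd : t ∣ n := by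
        have : 2 * t ∣ 2 * n := htm ▸ h2n
        exact (mul_dvd_mul_iff_left (by norm_num : (2:ℕ) ≠ 0)).mp this
      obtain ⟨s, hs⟩ := htd
      have hsodd : Odd s := by
        rcases Nat.even_or_odd s with he | ho
        · obtain ⟨u, hu⟩ := he
          exact absurd ⟨u, by rw [hs, hu, htm]; ring⟩ hnn
        · exact ho
      obtain ⟨u, hu⟩ := hsodd
      have hm2 : m / 2 = t := by omega
      refine ⟨heven, ?_⟩
      rw [hm2, ← hn, hs, hu]
      have hct2 : (c ^ t) ^ 2 = 1 := by
        rw [← pow_mul, hpowdvd]; exact ⟨1, by omega⟩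
      calc c ^ (t * (2 * u + 1)) = ((c ^ t) ^ 2) ^ u * c ^ t := by
            rw [← pow_mul, ← pow_mul, ← pow_add]; ring_nf
        _ = c ^ t := by rw [hct2, one_pow, one_mul]
    -- c^(m/2) is a matching when m is even
    have hmatch : Even m → IsMatching (c ^ (m / 2)) := by
      intro heven
      obtain ⟨t, ht⟩ := id heven
      have htm : m = 2 * t := by omega
      have hm2 : m / 2 = t := by omega
      have ht0 : 0 < t := by omega
      constructor
      · rw [hm2, ← pow_add, hpowdvd]; exact ⟨1, by omega⟩
      · intro x hx
        have : (c ^ (m / 2)) = 1 := by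
          rw [hcycle.pow_eq_one_iff' (hmoves x)]; exact hx
        rw [hpowdvd] at this
        exact absurd (Nat.le_of_dvd (by omega) this) (by omega)
    constructor
    · intro σ hσ
      constructor
      · exact key σ hσ
      · rintro ⟨heven, rfl⟩
        exact (Commute.refl c).pow_right _
    · by_cases heven : Even m
      · rw [if_pos heven, matchingCount, Nat.card_eq_one_iff_unique]
        constructor
        · constructor
          intro ⟨a, ha⟩ ⟨b, hb⟩
          have h1 := (key a ha.1 ha.2).2
          have h2 := (key b hb.1 hb.2).2
          exact Subtype.ext (h1.trans h2.symm)
        · exact ⟨⟨c ^ (m / 2), hmatch heven, (Commute.refl c).pow_right _⟩⟩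
      · rw [if_neg heven, matchingCount, Nat.card_eq_zero]
        left
        exact ⟨fun t => heven (key t.1 t.2.1 t.2.2).1⟩
end

section
/- Let g be a permutation of a finite set, let σ be a matching commuting with g, and suppose σ maps the support of one cycle of g to the support of another (disjoint) cycle of g of the same length a. If σ(α_1) = β_j, where (α_1 α_2 ⋯ α_a) and (β_1 β_2 ⋯ β_a) are the two cycles, then σ contains all the transpositions (α_1 β_j), (α_2 β_{j+1}), …, (α_a β_{j-1}) (indices modulo a); in particular, the restriction of σ to the union of the supports of the two cycles is completely determined by the image of a single point. -/
/-! Both cycles are orbits of `g`: `α i = g^[i] (α 0)` and likewise for `β`, so a map commuting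
with `g` and sending `α 0` to `β j` sends `g^[i] (α 0)` to `g^[i] (β j) = β (j + i)`. -/

open Fin.NatCast

theorem iterate_apply_of_apply_eq_add_one {a : ℕ} [NeZero a] {X : Type*} {g : X → X}
    {α : Fin a → X} (hg : ∀ i, g (α i) = α (i + 1)) (i : Fin a) (n : ℕ) :
    g^[n] (α i) = α (i + n) := by
  induction n with
  | zero => simp
  | succ n ih => rw [Function.iterate_succ_apply', ih, hg, Nat.cast_succ, add_assoc]

theorem Function.Semiconj.apply_eq_add_of_apply_zero {a : ℕ} [NeZero a] {X Y : Type*}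
    {σ : X → Y} {gX : X → X} {gY : Y → Y} (hσ : Function.Semiconj σ gX gY)
    {α : Fin a → X} {β : Fin a → Y} (hα : ∀ i, gX (α i) = α (i + 1))
    (hβ : ∀ i, gY (β i) = β (i + 1)) {j : Fin a} (h0 : σ (α 0) = β j) (i : Fin a) :
    σ (α i) = β (j + i) := by
  calc σ (α i) = σ (gX^[i] (α 0)) := by
        rw [iterate_apply_of_apply_eq_add_one hα, zero_add, Fin.cast_val_eq_self]
    _ = gY^[i] (σ (α 0)) := hσ.iterate_right i (α 0)
    _ = β (j + i) := by rw [h0, iterate_apply_of_apply_eq_add_one hβ, Fin.cast_val_eq_self]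

theorem stmt10_general (a : ℕ) [NeZero a] (X : Type*)
    (g σ : Equiv.Perm X) (hcomm : Commute g σ)
    (α β : Fin a → X)
    (hgα : ∀ i, g (α i) = α (i + 1)) (hgβ : ∀ i, g (β i) = β (i + 1))
    (j : Fin a) (h1 : σ (α 0) = β j) :
    ∀ i : Fin a, σ (α i) = β (j + i) :=
  Function.Semiconj.apply_eq_add_of_apply_zero
    (fun x => (DFunLike.congr_fun hcomm.eq x).symm) hgα hgβ h1

/-- Let `g` be a permutation of a finite set, `σ` a matching
commuting with `g`, and let `(α_1 ⋯ α_a)` and `(β_1 ⋯ β_a)` be two disjoint cycles of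
`g` of the same length `a` (encoded, 0-indexed, by `α β : Fin a → X` with `Sum.elim α β`
injective).  If `σ (α 0) = β j`, then `σ` contains all the transpositions
`(α_i β_{j+i})` (indices mod `a`): the restriction of `σ` to the two cycles is
completely determined by the image of a single point. -/
theorem stmt10 (a : ℕ) [NeZero a] (X : Type*) [Fintype X] [DecidableEq X]
    (g σ : Equiv.Perm X) (hσ : IsMatching σ) (hcomm : Commute g σ)
    (α β : Fin a → X) (hinj : Function.Injective (Sum.elim α β))
    (hgα : ∀ i, g (α i) = α (i + 1)) (hgβ : ∀ i, g (β i) = β (i + 1))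
    (j : Fin a) (h1 : σ (α 0) = β j) :
    ∀ i : Fin a, σ (α i) = β (j + i) :=
  stmt10_general a X g σ hcomm α β hgα hgβ j h1
end

section
/- Let g be a permutation of a finite set X and let σ be a matching on X commuting with g that maps the support of each cycle of g into itself (i.e., σ preserves every g-orbit). Then every cycle of g has even length, and on the support of each cycle c of g (of length a, necessarily even) σ restricts to c^{a/2}. -/
lemma card_orbit_eq {X : Type*} [Fintype X] (g : Equiv.Perm X) (x : X) :
    Nat.card {y : X // ∃ k : ℤ, (g ^ k) x = y} =
      Function.minimalPeriod (g • ·) x := by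
  classical
  have hset : {y : X | ∃ k : ℤ, (g ^ k) x = y} = MulAction.orbit (Subgroup.zpowers g) x := by
    ext y
    constructor
    · rintro ⟨k, rfl⟩; exact ⟨⟨g ^ k, Subgroup.zpow_mem _ (Subgroup.mem_zpowers g) k⟩, rfl⟩
    · rintro ⟨⟨h, k, rfl⟩, rfl⟩; exact ⟨k, rfl⟩
  have h2 : {y : X // ∃ k : ℤ, (g ^ k) x = y}
      = {y : X // y ∈ MulAction.orbit (Subgroup.zpowers g) x} := by
    simp only [← hset]; rfl
  rw [show {y : X // ∃ k : ℤ, (g ^ k) x = y}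
      = (MulAction.orbit (Subgroup.zpowers g) x : Set X) from h2]
  rw [Nat.card_eq_fintype_card, ← MulAction.minimalPeriod_eq_card]

lemma zpow_apply_eq_iff_dvd {X : Type*} [Fintype X] (g : Equiv.Perm X) (x : X) (n : ℤ) :
    (g ^ n) x = x ↔ (Function.minimalPeriod (g • ·) x : ℤ) ∣ n := by
  rw [← MulAction.zpow_smul_eq_iff_minimalPeriod_dvd]
  rfl

/-- Let `g` be a permutation of a finite set `X` and `σ` a matching
on `X` commuting with `g` that preserves every `g`-orbit.  Then every cycle of `g` has
even length and, on the `g`-orbit of each point `x` (of size `a`, necessarily even),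
`σ` restricts to the `a/2`-th power of the corresponding cycle, i.e. `σ x = g^{a/2} x`. -/
theorem stmt15 (X : Type*) [Fintype X] (g σ : Equiv.Perm X)
    (hσ : IsMatching σ) (hcomm : Commute g σ)
    (hpres : ∀ x : X, ∃ k : ℤ, σ x = (g ^ k) x) :
    ∀ x : X, Even (Nat.card {y : X // ∃ k : ℤ, (g ^ k) x = y}) ∧
      σ x = (g ^ (Nat.card {y : X // ∃ k : ℤ, (g ^ k) x = y} / 2)) x := by
  intro x
  obtain ⟨k, hk⟩ := hpres x
  set a : ℕ := Function.minimalPeriod (g • ·) x with ha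
  have hcard : Nat.card {y : X // ∃ k : ℤ, (g ^ k) x = y} = a := card_orbit_eq g x
  -- σ commutes with g^k
  have hcz : Commute (g ^ k) σ := hcomm.zpow_left k
  -- x = g^(2k) x
  have hxx : (g ^ (2 * k)) x = x := by
    have h1 : σ (σ x) = x := by
      have := congrArg (fun p : Equiv.Perm X => p x) hσ.1
      simpa [Equiv.Perm.mul_apply] using this
    have h2 : σ ((g ^ k) x) = (g ^ k) (σ x) := by
      have := congrArg (fun p : Equiv.Perm X => p x) hcz
      simpa [Equiv.Perm.mul_apply] using this.symm
    calc (g ^ (2 * k)) x = (g ^ k) ((g ^ k) x) := by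
          rw [two_mul, zpow_add, Equiv.Perm.mul_apply]
      _ = (g ^ k) (σ x) := by rw [hk]
      _ = σ ((g ^ k) x) := h2.symm
      _ = σ (σ x) := by rw [← hk]
      _ = x := h1
  have hdvd : (a : ℤ) ∣ 2 * k := (zpow_apply_eq_iff_dvd g x _).1 hxx
  have hnd : ¬ (a : ℤ) ∣ k := by
    intro h
    exact hσ.2 x (by rw [hk, (zpow_apply_eq_iff_dvd g x _).2 h])
  obtain ⟨m, hm⟩ := hdvd
  -- m is odd
  have hmodd : Odd m := by
    rcases Int.even_or_odd m with he | ho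
    · obtain ⟨n, rfl⟩ := he
      exact absurd ⟨n, by linarith [hm]⟩ hnd
    · exact ho
  -- a is even (as integer, hence as natural)
  have haeven : Even a := by
    have h2am : Even ((a : ℤ) * m) := ⟨k, by linarith [hm]⟩
    rcases (Int.even_mul).1 h2am with h | h
    · exact Int.even_coe_nat a |>.1 h
    · exact absurd h (Int.not_even_iff_odd.2 hmodd)
  obtain ⟨b, hb⟩ := haeven
  have hab : a = 2 * b := by omega
  -- k ≡ b mod a
  have hkb : (a : ℤ) ∣ (k - b) := by
    obtain ⟨n, hn⟩ := hmodd
    refine ⟨n, ?_⟩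
    have : (2 : ℤ) * k = (a : ℤ) * m := hm
    have hai : (a : ℤ) = 2 * b := by exact_mod_cast hab
    rw [hai] at this ⊢
    have hk2 : k = b * m := by linarith
    rw [hk2, hn]; ring
  have hgb : (g ^ k) x = (g ^ (b : ℤ)) x := by
    have hz : (g ^ (k - b)) x = x := (zpow_apply_eq_iff_dvd g x _).2 hkb
    calc (g ^ k) x = (g ^ ((b : ℤ) + (k - b))) x := by ring_nf
      _ = (g ^ (b : ℤ)) ((g ^ (k - b)) x) := by rw [zpow_add, Equiv.Perm.mul_apply]
      _ = (g ^ (b : ℤ)) x := by rw [hz]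
  refine ⟨?_, ?_⟩
  · rw [hcard]; exact ⟨b, hb⟩
  · rw [hcard, hab]
    have : 2 * b / 2 = b := by omega
    rw [this, hk, hgb, ← zpow_natCast]
end
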